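/- Let 0 < ε < 1/4 with εN an integer, and let constants satisfy c₁ ≥ 1, c₂ ≥ 1, and c₃ ≥ 5c₁. Assume the concentration condition with constant c₁. Let w ∈ Δ_{N,2ε}, let u ∈ ℝ^d be a unit vector, set r = ‖μ_w − μ*‖₂, and assume r ≥ c₂ ε √(ln(1/ε)). Then there exists j ∈ G with w_j < 1/((1−2ε)N) such that (∇_w F(w,u))_j − (uᵀμ*)·(uᵀ(μ* − 2μ_w)) ≤ c₃ r²/ε². -/

import Mathlib

/-
Let k = εN = |B|. The weights of w sum to 1, so at most (1 - 2ε)N indices reach the cap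
1/((1 - 2ε)N); hence G contains a set S of k indices below the cap. Testing the concentration
condition on the uniform weight on G \ S and on a weight moving part of that mass onto S bounds
∑_{i ∈ S} ⟨X_i - μ*, u⟩² by k (1 + 2 c₁ ln(1/ε)). With a = ⟨X_j - μ*, u⟩ and c = ⟨u, μ_w - μ*⟩,
the quantity to bound is a² - 2ca ≤ (1 + ε) a² + r²/ε, so averaging over S and using
r² ≥ ε² ln(1/ε) yields the index j.
-/

open Matrix Finset RealInnerProductSpace

/-- Euclidean (ℓ²) norm of a vector in `Fin n → ℝ`. -/
noncomputable def vnorm {n : ℕ} (v : Fin n → ℝ) : ℝ := Real.sqrt (∑ i, v i ^ 2)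

/-- Spectral norm (ℓ²-operator norm) of a matrix. -/
noncomputable def specNorm {m n : ℕ} (A : Matrix (Fin m) (Fin n) ℝ) : ℝ :=
  ‖LinearMap.toContinuousLinearMap (Matrix.toEuclideanLin A)‖

/-- Largest eigenvalue of a symmetric matrix, as the supremum of the Rayleigh quotient
over the unit sphere. -/
noncomputable def lambdaMax {n : ℕ} (A : Matrix (Fin n) (Fin n) ℝ) : ℝ :=
  sSup {r | ∃ v : Fin n → ℝ, vnorm v = 1 ∧ r = v ⬝ᵥ A.mulVec v}

/-- Weighted empirical mean `μ_w = X w`. -/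
noncomputable def muW {d N : ℕ} (X : Matrix (Fin d) (Fin N) ℝ) (w : Fin N → ℝ) : Fin d → ℝ :=
  X.mulVec w

/-- Weighted empirical covariance `Σ_w = ∑ i, w_i (X_i - μ_w)(X_i - μ_w)ᵀ`. -/
noncomputable def covW {d N : ℕ} (X : Matrix (Fin d) (Fin N) ℝ) (w : Fin N → ℝ) :
    Matrix (Fin d) (Fin d) ℝ :=
  ∑ i : Fin N, w i • Matrix.vecMulVec (Xᵀ i - X.mulVec w) (Xᵀ i - X.mulVec w)

/-- The constraint set `Δ_{N,ε}`. -/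
def deltaSet (N : ℕ) (ε : ℝ) : Set (Fin N → ℝ) :=
  {w | (∑ i, w i) = 1 ∧ ∀ i, 0 ≤ w i ∧ w i ≤ 1 / ((1 - ε) * N)}

/-- Gradient in `w` of `F(w,u) = uᵀ Σ_w u`: the `i`-th coordinate is
`(X_iᵀu)² − 2(uᵀXw)(X_iᵀu)`. -/
noncomputable def gradFw {d N : ℕ} (X : Matrix (Fin d) (Fin N) ℝ) (w : Fin N → ℝ)
    (u : Fin d → ℝ) : Fin N → ℝ :=
  fun i => (Xᵀ i ⬝ᵥ u) ^ 2 - 2 * (u ⬝ᵥ X.mulVec w) * (Xᵀ i ⬝ᵥ u)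

/-- The matrix `Y = exp(ρ Σ_w) / tr(exp(ρ Σ_w))`. -/
noncomputable def ymat {d N : ℕ} (X : Matrix (Fin d) (Fin N) ℝ) (ρ : ℝ) (w : Fin N → ℝ) :
    Matrix (Fin d) (Fin d) ℝ :=
  ((NormedSpace.exp (ρ • covW X w)).trace)⁻¹ • NormedSpace.exp (ρ • covW X w)

/-- The softmax objective `f(w) = (1/ρ) ln tr exp(ρ Σ_w)`. -/
noncomputable def smaxObj {d N : ℕ} (X : Matrix (Fin d) (Fin N) ℝ) (ρ : ℝ) (w : Fin N → ℝ) : ℝ :=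
  (1 / ρ) * Real.log (NormedSpace.exp (ρ • covW X w)).trace

/-- Gradient of the softmax objective: `∇f(w)_i = X_iᵀ Y X_i − 2 X_iᵀ Y μ_w`. -/
noncomputable def gradSmax {d N : ℕ} (X : Matrix (Fin d) (Fin N) ℝ) (ρ : ℝ) (w : Fin N → ℝ) :
    Fin N → ℝ :=
  fun i => Xᵀ i ⬝ᵥ (ymat X ρ w).mulVec (Xᵀ i) - 2 * (Xᵀ i ⬝ᵥ (ymat X ρ w).mulVec (muW X w))

/-- Matrix logarithm of a symmetric matrix, via the spectral theorem (junk value `0` on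
non-Hermitian input). -/
noncomputable def matLog {n : ℕ} (Y : Matrix (Fin n) (Fin n) ℝ) : Matrix (Fin n) (Fin n) ℝ :=
  if h : Y.IsHermitian then h.cfc Real.log else 0

lemma vnorm_eq_norm {n : ℕ} (v : Fin n → ℝ) : vnorm v = ‖WithLp.toLp 2 v‖ := by
  simp [vnorm, EuclideanSpace.norm_eq]

lemma sq_vnorm {n : ℕ} (v : Fin n → ℝ) : vnorm v ^ 2 = v ⬝ᵥ v := by
  rw [vnorm, Real.sq_sqrt (Finset.sum_nonneg fun i _ => sq_nonneg _)]
  simp [dotProduct, sq]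

lemma abs_dotProduct_le_vnorm_mul_vnorm {n : ℕ} (u v : Fin n → ℝ) :
    |u ⬝ᵥ v| ≤ vnorm u * vnorm v := by
  rw [vnorm_eq_norm, vnorm_eq_norm, dotProduct_comm]
  exact abs_real_inner_le_norm (WithLp.toLp 2 u) (WithLp.toLp 2 v)

lemma vnorm_mulVec_le {m n : ℕ} (A : Matrix (Fin m) (Fin n) ℝ) (v : Fin n → ℝ) :
    vnorm (A *ᵥ v) ≤ specNorm A * vnorm v := by
  rw [vnorm_eq_norm, vnorm_eq_norm]
  exact (LinearMap.toContinuousLinearMap (Matrix.toEuclideanLin A)).le_opNorm (WithLp.toLp 2 v)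

lemma abs_dotProduct_mulVec_le {m n : ℕ} (A : Matrix (Fin m) (Fin n) ℝ) (u : Fin m → ℝ)
    (v : Fin n → ℝ) : |u ⬝ᵥ A *ᵥ v| ≤ specNorm A * vnorm u * vnorm v :=
  calc |u ⬝ᵥ A *ᵥ v| ≤ vnorm u * vnorm (A *ᵥ v) := abs_dotProduct_le_vnorm_mul_vnorm _ _
    _ ≤ vnorm u * (specNorm A * vnorm v) := by
        gcongr
        · exact Real.sqrt_nonneg _
        · exact vnorm_mulVec_le A v
    _ = specNorm A * vnorm u * vnorm v := by ring

lemma dotProduct_sum_smul_vecMulVec_mulVec {ι : Type*} {d : ℕ} (s : Finset ι) (v : ι → ℝ)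
    (f : ι → Fin d → ℝ) (u : Fin d → ℝ) :
    u ⬝ᵥ (∑ i ∈ s, v i • vecMulVec (f i) (f i)) *ᵥ u = ∑ i ∈ s, v i * (f i ⬝ᵥ u) ^ 2 := by
  simp only [sum_mulVec, dotProduct_sum, smul_mulVec, vecMulVec_mulVec, dotProduct_smul]
  refine Finset.sum_congr rfl fun i _ => ?_
  rw [MulOpposite.smul_eq_mul_unop, MulOpposite.unop_op, dotProduct_comm u (f i), smul_eq_mul]
  ring

lemma abs_sum_mul_sq_sub_one_le_specNorm {ι : Type*} {d : ℕ} (s : Finset ι) (v : ι → ℝ)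
    (f : ι → Fin d → ℝ) {u : Fin d → ℝ} (hu : vnorm u = 1) :
    |∑ i ∈ s, v i * (f i ⬝ᵥ u) ^ 2 - 1| ≤ specNorm (∑ i ∈ s, v i • vecMulVec (f i) (f i) - 1) := by
  have huu : u ⬝ᵥ u = 1 := by rw [← sq_vnorm, hu, one_pow]
  have := abs_dotProduct_mulVec_le (∑ i ∈ s, v i • vecMulVec (f i) (f i) - 1) u u
  rwa [hu, mul_one, mul_one, sub_mulVec, dotProduct_sub, one_mulVec, huu,
    dotProduct_sum_smul_vecMulVec_mulVec] at this

lemma exists_subset_card_eq_forall_lt {ι : Type*} [Fintype ι] {w : ι → ℝ} (hw0 : ∀ i, 0 ≤ w i)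
    (hw1 : ∑ i, w i = 1) {G : Finset ι} {c : ℝ} (hc : 0 < c) {k : ℕ} (hk : k + c⁻¹ ≤ #G) :
    ∃ S ⊆ G, #S = k ∧ ∀ j ∈ S, w j < c := by
  have hheavy : (#{j ∈ G | ¬ w j < c} : ℝ) * c ≤ 1 :=
    calc (#{j ∈ G | ¬ w j < c} : ℝ) * c = ∑ j ∈ G with ¬ w j < c, c := by simp
      _ ≤ ∑ j ∈ G with ¬ w j < c, w j := sum_le_sum fun j hj => not_lt.1 (mem_filter.1 hj).2
      _ ≤ ∑ i, w i := sum_le_sum_of_subset_of_nonneg (subset_univ _) fun i _ _ => hw0 i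
      _ = 1 := hw1
  have hlight : k ≤ #{j ∈ G | w j < c} := by
    have hsplit : (#{j ∈ G | w j < c} : ℝ) + #{j ∈ G | ¬ w j < c} = #G := by
      exact_mod_cast card_filter_add_card_filter_not _
    have : (#{j ∈ G | ¬ w j < c} : ℝ) ≤ c⁻¹ := by rwa [← one_div, le_div_iff₀ hc]
    exact_mod_cast (show (k : ℝ) ≤ #{j ∈ G | w j < c} by linarith)
  obtain ⟨S, hS, hScard⟩ := exists_subset_card_eq hlight
  exact ⟨S, hS.trans (filter_subset _ _), hScard, fun j hj => (mem_filter.1 (hS hj)).2⟩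

lemma sum_ite_mem_mul {ι : Type*} [DecidableEq ι] {s t : Finset ι} (hts : t ⊆ s) (c : ℝ)
    (a : ι → ℝ) : ∑ i ∈ s, (if i ∈ t then c else 0) * a i = c * ∑ i ∈ t, a i := by
  simp only [ite_mul, zero_mul, sum_ite_mem, inter_eq_right.2 hts, mul_sum]

lemma ite_add_mul_ite_mem_deltaSet {N : ℕ} {η θ : ℝ} {S T : Finset (Fin N)} (hST : Disjoint S T)
    (hT : (#T : ℝ) = (1 - η) * N) (hT0 : 0 < #T) (hθ0 : 0 ≤ θ) (hθ1 : θ ≤ 1)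
    (hθ : #S + θ * #T = #T) :
    (fun i => (if i ∈ S then (#T : ℝ)⁻¹ else 0) + θ * (if i ∈ T then (#T : ℝ)⁻¹ else 0)) ∈
      deltaSet N η := by
  have hm : (0 : ℝ) < #T := Nat.cast_pos.2 hT0
  refine ⟨?_, fun i => ?_⟩
  · simp only [sum_add_distrib, ← mul_sum, sum_ite_mem, univ_inter, sum_const, nsmul_eq_mul]
    field_simp
    linarith
  · rw [← hT, one_div]
    by_cases hiS : i ∈ S
    · simp [hiS, disjoint_left.1 hST hiS, hm.le]
    · by_cases hiT : i ∈ T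
      · simp only [hiS, hiT, if_false, if_true, zero_add]
        exact ⟨mul_nonneg hθ0 (inv_nonneg.2 hm.le), mul_le_of_le_one_left (inv_nonneg.2 hm.le) hθ1⟩
      · simp [hiS, hiT]

lemma sum_le_card_add_of_forall_abs_sub_one_le {N : ℕ} {η δ : ℝ} (a : Fin N → ℝ)
    {G S : Finset (Fin N)} (hSG : S ⊆ G) (hT : (#(G \ S) : ℝ) = (1 - η) * N)
    (hST : #S ≤ #(G \ S)) (hconc : ∀ v ∈ deltaSet N η, |∑ i ∈ G, v i * a i - 1| ≤ δ) :
    ∑ i ∈ S, a i ≤ #S + 2 * δ * #(G \ S) := by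
  set T := G \ S
  rcases (Nat.zero_le #T).eq_or_lt with hT0 | hT0
  · obtain rfl : S = ∅ := card_eq_zero.1 (by omega)
    simp [← hT0]
  have hm : (0 : ℝ) < #T := Nat.cast_pos.2 hT0
  have hsm : (#S : ℝ) ≤ #T := by exact_mod_cast hST
  have hTG : T ⊆ G := sdiff_subset
  set m : ℝ := (#T : ℝ)
  set θ : ℝ := 1 - #S / m
  have hθ0 : 0 ≤ θ := by rwa [sub_nonneg, div_le_one hm]
  have hθ1 : θ ≤ 1 := by linarith [div_nonneg (Nat.cast_nonneg #S) hm.le]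
  have hQ : ∀ {R : Finset (Fin N)} (t : ℝ), R ⊆ G →
      ∑ i ∈ G, ((if i ∈ R then m⁻¹ else 0) + t * (if i ∈ T then m⁻¹ else 0)) * a i =
        m⁻¹ * ∑ i ∈ R, a i + t * (m⁻¹ * ∑ i ∈ T, a i) := fun t hR => by
    simp only [add_mul, sum_add_distrib, mul_assoc, ← mul_sum, sum_ite_mem_mul hR,
      sum_ite_mem_mul hTG]
  -- Testing against the weight `m⁻¹ 1_S + θ m⁻¹ 1_T` and the uniform weight `m⁻¹ 1_T`
  -- isolates `m⁻¹ ∑_S a` up to an error `(1 + θ) δ ≤ 2 δ`.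
  have hv := hconc _ (ite_add_mul_ite_mem_deltaSet disjoint_sdiff hT hT0 hθ0 hθ1 (by
    simp only [θ]; field_simp; ring))
  have hunif := hconc _ (ite_add_mul_ite_mem_deltaSet (disjoint_empty_left T) hT hT0 zero_le_one
    le_rfl (by simp))
  rw [hQ θ hSG] at hv
  rw [hQ 1 (empty_subset G), sum_empty, mul_zero, zero_add, one_mul] at hunif
  have hδ : 0 ≤ δ := (abs_nonneg _).trans hunif
  have hmS : m⁻¹ * ∑ i ∈ S, a i ≤ #S / m + 2 * δ := by
    have hsθ : #S / m = 1 - θ := by ring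
    linarith [abs_le.1 hv, mul_le_mul_of_nonneg_left (abs_le.1 hunif).1 hθ0,
      mul_le_of_le_one_left hδ hθ1]
  calc ∑ i ∈ S, a i = m * (m⁻¹ * ∑ i ∈ S, a i) := by field_simp
    _ ≤ m * (#S / m + 2 * δ) := by gcongr
    _ = #S + 2 * δ * m := by field_simp

lemma pos_of_mem_deltaSet {N : ℕ} {η : ℝ} {w : Fin N → ℝ} (hw : w ∈ deltaSet N η) : 0 < N :=
  Nat.pos_of_ne_zero fun h => by subst h; simp [deltaSet] at hw

lemma exists_subset_forall_lt_sum_sq_le {d N : ℕ} (X : Matrix (Fin d) (Fin N) ℝ) (μs : Fin d → ℝ)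
    {G B : Finset (Fin N)} {ε c₁ : ℝ} (hGcard : (#G : ℝ) = (1 - ε) * N)
    (hBcard : (#B : ℝ) = ε * N) (hε0 : 0 < ε) (hε1 : ε < 1 / 4) (hc₁ : 0 ≤ c₁)
    (hconc : ∀ v ∈ deltaSet N (2 * ε),
      specNorm ((∑ i ∈ G, v i • vecMulVec (Xᵀ i - μs) (Xᵀ i - μs)) - 1) ≤
        c₁ * ε * Real.log (1 / ε))
    {w : Fin N → ℝ} (hw : w ∈ deltaSet N (2 * ε)) {u : Fin d → ℝ} (hu : vnorm u = 1) :
    ∃ S ⊆ G, #S = #B ∧ (∀ j ∈ S, w j < 1 / ((1 - 2 * ε) * N)) ∧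
      ∑ i ∈ S, ((Xᵀ i - μs) ⬝ᵥ u) ^ 2 ≤ #B * (1 + 2 * c₁ * Real.log (1 / ε)) := by
  have hN : 0 < (N : ℝ) := Nat.cast_pos.2 (pos_of_mem_deltaSet hw)
  have h2ε : 0 < 1 - 2 * ε := by linarith
  obtain ⟨S, hSG, hScard, hSw⟩ := exists_subset_card_eq_forall_lt (fun i => (hw.2 i).1) hw.1
    (G := G) (c := 1 / ((1 - 2 * ε) * N)) (k := #B) (by positivity)
    (by rw [one_div, inv_inv, hGcard, hBcard]; linarith)
  have hT : (#(G \ S) : ℝ) = (1 - 2 * ε) * N := by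
    rw [card_sdiff_of_subset hSG, Nat.cast_sub (card_le_card hSG), hGcard, hScard, hBcard]; ring
  have hST : #S ≤ #(G \ S) := by
    exact_mod_cast (show (#S : ℝ) ≤ #(G \ S) by rw [hT, hScard, hBcard]; nlinarith)
  have hsum := sum_le_card_add_of_forall_abs_sub_one_le (fun i => ((Xᵀ i - μs) ⬝ᵥ u) ^ 2) hSG hT
    hST fun v hv => (abs_sum_mul_sq_sub_one_le_specNorm G v _ hu).trans (hconc v hv)
  have hL : 0 ≤ Real.log (1 / ε) := Real.log_nonneg (by rw [le_div_iff₀ hε0]; linarith)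
  refine ⟨S, hSG, hScard, hSw, hsum.trans ?_⟩
  rw [hT, hScard, hBcard]
  nlinarith [mul_nonneg (mul_nonneg hc₁ hL) (mul_nonneg (sq_nonneg ε) hN.le)]

lemma gradFw_sub_eq {d N : ℕ} (X : Matrix (Fin d) (Fin N) ℝ) (w : Fin N → ℝ) (u μs : Fin d → ℝ)
    (j : Fin N) :
    gradFw X w u j - (u ⬝ᵥ μs) * (u ⬝ᵥ (μs - (2 : ℝ) • muW X w)) =
      ((Xᵀ j - μs) ⬝ᵥ u) ^ 2 - 2 * (u ⬝ᵥ (muW X w - μs)) * ((Xᵀ j - μs) ⬝ᵥ u) := by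
  simp only [gradFw, muW, dotProduct_sub, sub_dotProduct, dotProduct_smul, smul_eq_mul,
    dotProduct_comm μs u]
  ring

lemma gradFw_sub_le {d N : ℕ} (X : Matrix (Fin d) (Fin N) ℝ) (w : Fin N → ℝ) {u : Fin d → ℝ}
    (hu : vnorm u = 1) (μs : Fin d → ℝ) {ε : ℝ} (hε : 0 < ε) (j : Fin N) :
    gradFw X w u j - (u ⬝ᵥ μs) * (u ⬝ᵥ (μs - (2 : ℝ) • muW X w)) ≤
      (1 + ε) * ((Xᵀ j - μs) ⬝ᵥ u) ^ 2 + vnorm (muW X w - μs) ^ 2 / ε := by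
  set a := (Xᵀ j - μs) ⬝ᵥ u
  set c := u ⬝ᵥ (muW X w - μs)
  have hc : c ^ 2 ≤ vnorm (muW X w - μs) ^ 2 := by
    simpa [hu, sq_abs] using pow_le_pow_left₀ (abs_nonneg c)
      (abs_dotProduct_le_vnorm_mul_vnorm u (muW X w - μs)) 2
  -- `a² - 2ca ≤ (1 + ε) a² + c² / ε` is `(ε a + c)² / ε ≥ 0`.
  have hamgm : a ^ 2 - 2 * c * a ≤ (1 + ε) * a ^ 2 + c ^ 2 / ε := by
    have : 0 ≤ (ε * a + c) ^ 2 / ε := by positivity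
    have : (ε * a + c) ^ 2 / ε = ε * a ^ 2 + 2 * c * a + c ^ 2 / ε := by field_simp; ring
    linarith
  rw [gradFw_sub_eq]
  linarith [div_le_div_of_nonneg_right hc hε.le]

lemma exists_gradFw_sub_le {d N : ℕ} (X : Matrix (Fin d) (Fin N) ℝ) (w : Fin N → ℝ)
    {u : Fin d → ℝ} (hu : vnorm u = 1) (μs : Fin d → ℝ) {ε A : ℝ} (hε : 0 < ε)
    {S : Finset (Fin N)} (hS : S.Nonempty) (hSsq : ∑ i ∈ S, ((Xᵀ i - μs) ⬝ᵥ u) ^ 2 ≤ #S * A) :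
    ∃ j ∈ S, gradFw X w u j - (u ⬝ᵥ μs) * (u ⬝ᵥ (μs - (2 : ℝ) • muW X w)) ≤
      (1 + ε) * A + vnorm (muW X w - μs) ^ 2 / ε := by
  refine exists_le_of_sum_le hS ?_
  calc ∑ j ∈ S, (gradFw X w u j - (u ⬝ᵥ μs) * (u ⬝ᵥ (μs - (2 : ℝ) • muW X w)))
      ≤ ∑ j ∈ S, ((1 + ε) * ((Xᵀ j - μs) ⬝ᵥ u) ^ 2 + vnorm (muW X w - μs) ^ 2 / ε) :=
        sum_le_sum fun j _ => gradFw_sub_le X w hu μs hε j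
    _ = (1 + ε) * ∑ j ∈ S, ((Xᵀ j - μs) ⬝ᵥ u) ^ 2 + #S * (vnorm (muW X w - μs) ^ 2 / ε) := by
        rw [sum_add_distrib, ← mul_sum, sum_const, nsmul_eq_mul]
    _ ≤ ∑ _j ∈ S, ((1 + ε) * A + vnorm (muW X w - μs) ^ 2 / ε) := by
        rw [sum_const, nsmul_eq_mul]
        nlinarith [mul_le_mul_of_nonneg_left hSsq (by linarith : (0 : ℝ) ≤ 1 + ε)]

lemma three_div_four_le_log_one_div {ε : ℝ} (hε0 : 0 < ε) (hε1 : ε < 1 / 4) :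
    3 / 4 ≤ Real.log (1 / ε) := by
  have h := Real.one_sub_inv_le_log_of_pos (one_div_pos.2 hε0)
  rw [inv_div, div_one] at h
  linarith

lemma le_sq_div_sq_of_mul_mul_sqrt_le {ε c L r : ℝ} (hε0 : 0 < ε) (hc : 1 ≤ c) (hL : 0 ≤ L)
    (hr : c * ε * Real.sqrt L ≤ r) : L ≤ r ^ 2 / ε ^ 2 := by
  have hεL : 0 ≤ ε * Real.sqrt L := by positivity
  have hεLr : ε * Real.sqrt L ≤ r := by nlinarith [mul_le_mul_of_nonneg_right hc hεL]
  rw [le_div_iff₀ (by positivity)]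
  calc L * ε ^ 2 = (ε * Real.sqrt L) ^ 2 := by rw [mul_pow, Real.sq_sqrt hL]; ring
    _ ≤ r ^ 2 := pow_le_pow_left₀ hεL hεLr 2

lemma one_add_mul_add_div_le {ε c₁ c₃ L r : ℝ} (hε0 : 0 < ε) (hε1 : ε < 1 / 4) (hc₁ : 1 ≤ c₁)
    (hc₃ : 5 * c₁ ≤ c₃) (hL : 3 / 4 ≤ L) (hr : L ≤ r ^ 2 / ε ^ 2) :
    (1 + ε) * (1 + 2 * c₁ * L) + r ^ 2 / ε ≤ c₃ * r ^ 2 / ε ^ 2 := by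
  set t := r ^ 2 / ε ^ 2
  have hεt : r ^ 2 / ε = ε * t := by simp only [t]; field_simp
  have ht0 : 0 ≤ t := by linarith
  have hc₁L : 0 ≤ c₁ * L := by positivity
  rw [hεt, mul_div_assoc]
  nlinarith [mul_le_mul_of_nonneg_left hr (by linarith : (0 : ℝ) ≤ c₁),
    mul_le_mul_of_nonneg_right hε1.le hc₁L, mul_le_mul_of_nonneg_right hε1.le ht0,
    mul_le_mul_of_nonneg_right hc₁ ht0, mul_le_mul_of_nonneg_right hc₃ ht0]

theorem stmt_2_general {d N : ℕ} (X : Matrix (Fin d) (Fin N) ℝ) (μs : Fin d → ℝ)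
    (G B : Finset (Fin N)) (ε c₁ c₂ c₃ : ℝ)
    (hGcard : (G.card : ℝ) = (1 - ε) * N) (hBcard : (B.card : ℝ) = ε * N)
    (hε0 : 0 < ε) (hε1 : ε < 1 / 4)
    (hc₁ : 1 ≤ c₁) (hc₂ : 1 ≤ c₂) (hc₃ : 5 * c₁ ≤ c₃)
    (hconc : ∀ v ∈ deltaSet N (2 * ε),
      specNorm ((∑ i ∈ G, v i • Matrix.vecMulVec (Xᵀ i - μs) (Xᵀ i - μs)) - 1) ≤
        c₁ * ε * Real.log (1 / ε))
    (w : Fin N → ℝ) (hw : w ∈ deltaSet N (2 * ε))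
    (u : Fin d → ℝ) (hu : vnorm u = 1)
    (hr : c₂ * ε * Real.sqrt (Real.log (1 / ε)) ≤ vnorm (muW X w - μs)) :
    ∃ j ∈ G, w j < 1 / ((1 - 2 * ε) * N) ∧
      gradFw X w u j - (u ⬝ᵥ μs) * (u ⬝ᵥ (μs - (2 : ℝ) • muW X w)) ≤
        c₃ * vnorm (muW X w - μs) ^ 2 / ε ^ 2 := by
  have hL := three_div_four_le_log_one_div hε0 hε1
  obtain ⟨S, hSG, hScard, hSw, hSsq⟩ :=
    exists_subset_forall_lt_sum_sq_le X μs hGcard hBcard hε0 hε1 (by linarith) hconc hw hu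
  have hSne : S.Nonempty := by
    rw [← card_pos, ← Nat.cast_pos (α := ℝ), hScard, hBcard]
    exact mul_pos hε0 (Nat.cast_pos.2 (pos_of_mem_deltaSet hw))
  obtain ⟨j, hjS, hj⟩ := exists_gradFw_sub_le X w hu μs hε0 hSne (hScard ▸ hSsq)
  refine ⟨j, hSG hjS, hSw j hjS, hj.trans (one_add_mul_add_div_le hε0 hε1 hc₁ hc₃ hL ?_)⟩
  exact le_sq_div_sq_of_mul_mul_sqrt_le hε0 hc₂ (by linarith) hr

/-- there is a good sample with small gradient coordinate. -/
theorem stmt_2 {d N : ℕ} (X : Matrix (Fin d) (Fin N) ℝ) (μs : Fin d → ℝ)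
    (G B : Finset (Fin N)) (ε c₁ c₂ c₃ : ℝ)
    (hGB : Disjoint G B) (hUnion : G ∪ B = Finset.univ)
    (hGcard : (G.card : ℝ) = (1 - ε) * N) (hBcard : (B.card : ℝ) = ε * N)
    (hε0 : 0 < ε) (hε1 : ε < 1 / 4)
    (hc₁ : 1 ≤ c₁) (hc₂ : 1 ≤ c₂) (hc₃ : 5 * c₁ ≤ c₃)
    (hconc : ∀ v ∈ deltaSet N (2 * ε),
      specNorm ((∑ i ∈ G, v i • Matrix.vecMulVec (Xᵀ i - μs) (Xᵀ i - μs)) - 1) ≤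
        c₁ * ε * Real.log (1 / ε))
    (w : Fin N → ℝ) (hw : w ∈ deltaSet N (2 * ε))
    (u : Fin d → ℝ) (hu : vnorm u = 1)
    (hr : c₂ * ε * Real.sqrt (Real.log (1 / ε)) ≤ vnorm (muW X w - μs)) :
    ∃ j ∈ G, w j < 1 / ((1 - 2 * ε) * N) ∧
      gradFw X w u j - (u ⬝ᵥ μs) * (u ⬝ᵥ (μs - (2 : ℝ) • muW X w)) ≤
        c₃ * vnorm (muW X w - μs) ^ 2 / ε ^ 2 :=
  stmt_2_general X μs G B ε c₁ c₂ c₃ hGcard hBcard hε0 hε1 hc₁ hc₂ hc₃ hconc w hw u hu hr
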